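/- arXiv:1305.2982 — 2 statements merged into one kernel-verified Lean document; each statement's English description precedes it below -/
import Mathlib

section
/- Let (Ω, P) be a probability space, let z : Ω → ℝ be uniformly distributed on [0,1], let a ∈ ℝ, σ(a) = 1/(1 + exp(−a)), and h = 1_{z < σ(a)}. Let L₁, L₀ : Ω → ℝ be integrable random variables (the losses when the neuron outputs 1 and 0 respectively) each independent of z, and set L = h·L₁ + (1 − h)·L₀. Then E[(h − σ(a))·L] = σ(a)(1 − σ(a))·(E[L₁] − E[L₀]). -/
/-!
Since `h ∈ {0, 1}`, the estimator splits as
`(h - σ) L = (1 - σ) · 1_{z < σ} L₁ - σ · 1_{z ≥ σ} L₀`.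
Each `Lᵢ` is independent of `z`, so restricting it to an event defined by `z` scales its
expectation by the probability of that event, and for uniform `z` these probabilities are
`σ` and `1 - σ`.
-/

open MeasureTheory ProbabilityTheory

/-- The logistic sigmoid `σ(a) = 1/(1 + exp(−a))`. -/
noncomputable def sigmoid (a : ℝ) : ℝ := 1 / (1 + Real.exp (-a))

lemma sigmoid_pos (a : ℝ) : 0 < sigmoid a := by
  unfold sigmoid
  positivity

lemma sigmoid_lt_one (a : ℝ) : sigmoid a < 1 := by
  unfold sigmoid
  rw [div_lt_one (by positivity)]
  linarith [Real.exp_pos (-a)]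

section Uniform

variable {Ω : Type*} [MeasurableSpace Ω] {μ : Measure Ω} {z : Ω → ℝ}

lemma measureReal_preimage_of_map_eq_uniform (hz : Measurable z)
    (hunif : μ.map z = volume.restrict (Set.Icc 0 1)) {S : Set ℝ} (hS : MeasurableSet S) :
    μ.real (z ⁻¹' S) = volume.real (S ∩ Set.Icc 0 1) := by
  rw [← map_measureReal_apply hz hS, hunif, measureReal_restrict_apply hS]

lemma measureReal_preimage_Iio_of_map_eq_uniform (hz : Measurable z)
    (hunif : μ.map z = volume.restrict (Set.Icc 0 1)) {p : ℝ} (hp : p ∈ Set.Icc 0 1) :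
    μ.real (z ⁻¹' Set.Iio p) = p := by
  have hS : Set.Iio p ∩ Set.Icc 0 1 = Set.Ico 0 p := by
    ext x
    simp only [Set.mem_inter_iff, Set.mem_Iio, Set.mem_Icc, Set.mem_Ico]
    grind
  rw [measureReal_preimage_of_map_eq_uniform hz hunif measurableSet_Iio, hS,
    Real.volume_real_Ico_of_le hp.1, sub_zero]

lemma measureReal_preimage_Ici_of_map_eq_uniform (hz : Measurable z)
    (hunif : μ.map z = volume.restrict (Set.Icc 0 1)) {p : ℝ} (hp : p ∈ Set.Icc 0 1) :
    μ.real (z ⁻¹' Set.Ici p) = 1 - p := by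
  have hS : Set.Ici p ∩ Set.Icc 0 1 = Set.Icc p 1 := by
    ext x
    simp only [Set.mem_inter_iff, Set.mem_Ici, Set.mem_Icc]
    grind
  rw [measureReal_preimage_of_map_eq_uniform hz hunif measurableSet_Ici, hS,
    Real.volume_real_Icc_of_le hp.2]

end Uniform

lemma ProbabilityTheory.IndepFun.setIntegral_preimage_eq_mul {Ω β : Type*} [MeasurableSpace Ω]
    [MeasurableSpace β] {μ : Measure Ω} {X : Ω → ℝ} {Y : Ω → β} (hXY : IndepFun X Y μ)
    (hX : AEStronglyMeasurable X μ) (hY : Measurable Y) {S : Set β} (hS : MeasurableSet S) :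
    ∫ ω in Y ⁻¹' S, X ω ∂μ = μ.real (Y ⁻¹' S) * ∫ ω, X ω ∂μ := by
  have hf : Measurable (S.indicator (1 : β → ℝ)) := measurable_one.indicator hS
  have hind : IndepFun (S.indicator 1 ∘ Y) X μ := hXY.symm.comp hf measurable_id
  calc ∫ ω in Y ⁻¹' S, X ω ∂μ = ∫ ω, (S.indicator (1 : β → ℝ) (Y ω)) * X ω ∂μ := by
        rw [← integral_indicator (hY hS)]
        congr 1 with ω
        by_cases hω : Y ω ∈ S <;> simp [hω]
    _ = μ.real (Y ⁻¹' S) * ∫ ω, X ω ∂μ := by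
        rw [← integral_indicator_one (hY hS)]
        exact hind.integral_mul_eq_mul_integral (hf.comp hY).aestronglyMeasurable hX

theorem stmt1_general {Ω : Type*} [MeasurableSpace Ω] (μ : Measure Ω)
    (z : Ω → ℝ) (hz : Measurable z)
    (hunif : Measure.map z μ = volume.restrict (Set.Icc (0 : ℝ) 1))
    (a : ℝ) (h : Ω → ℝ) (hh : h = fun ω => if z ω < sigmoid a then 1 else 0)
    (L₁ L₀ : Ω → ℝ) (hL₁ : Integrable L₁ μ) (hL₀ : Integrable L₀ μ)
    (hind₁ : IndepFun L₁ z μ) (hind₀ : IndepFun L₀ z μ)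
    (L : Ω → ℝ) (hL : L = fun ω => h ω * L₁ ω + (1 - h ω) * L₀ ω) :
    (∫ ω, (h ω - sigmoid a) * L ω ∂μ)
      = sigmoid a * (1 - sigmoid a) * ((∫ ω, L₁ ω ∂μ) - ∫ ω, L₀ ω ∂μ) := by
  set s := sigmoid a
  have hs : s ∈ Set.Icc 0 1 := ⟨(sigmoid_pos a).le, (sigmoid_lt_one a).le⟩
  have hsplit : (fun ω => (h ω - s) * L ω) = fun ω =>
      (1 - s) * (z ⁻¹' Set.Iio s).indicator L₁ ω - s * (z ⁻¹' Set.Ici s).indicator L₀ ω := by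
    funext ω
    by_cases hω : z ω < s <;> simp [hh, hL, hω, not_lt.mp]
  rw [hsplit, integral_sub ((hL₁.indicator (hz measurableSet_Iio)).const_mul _)
      ((hL₀.indicator (hz measurableSet_Ici)).const_mul _),
    integral_const_mul, integral_const_mul,
    integral_indicator (hz measurableSet_Iio), integral_indicator (hz measurableSet_Ici),
    hind₁.setIntegral_preimage_eq_mul hL₁.aestronglyMeasurable hz measurableSet_Iio,
    hind₀.setIntegral_preimage_eq_mul hL₀.aestronglyMeasurable hz measurableSet_Ici,
    measureReal_preimage_Iio_of_map_eq_uniform hz hunif hs,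
    measureReal_preimage_Ici_of_map_eq_uniform hz hunif hs]
  ring

/-- With `z` uniform on `[0,1]`, `h = 1_{z < σ(a)}`, and `L₁, L₀`
integrable losses independent of `z`, letting `L = h·L₁ + (1 − h)·L₀`, the
estimator satisfies `E[(h − σ(a))·L] = σ(a)(1 − σ(a))·(E[L₁] − E[L₀])`. -/
theorem stmt1 {Ω : Type*} [MeasurableSpace Ω] (μ : Measure Ω) [IsProbabilityMeasure μ]
    (z : Ω → ℝ) (hz : Measurable z)
    (hunif : Measure.map z μ = volume.restrict (Set.Icc (0 : ℝ) 1))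
    (a : ℝ) (h : Ω → ℝ) (hh : h = fun ω => if z ω < sigmoid a then 1 else 0)
    (L₁ L₀ : Ω → ℝ) (hL₁ : Integrable L₁ μ) (hL₀ : Integrable L₀ μ)
    (hind₁ : IndepFun L₁ z μ) (hind₀ : IndepFun L₀ z μ)
    (L : Ω → ℝ) (hL : L = fun ω => h ω * L₁ ω + (1 - h ω) * L₀ ω) :
    (∫ ω, (h ω - sigmoid a) * L ω ∂μ)
      = sigmoid a * (1 - sigmoid a) * ((∫ ω, L₁ ω ∂μ) - ∫ ω, L₀ ω ∂μ) :=
  stmt1_general μ z hz hunif a h hh L₁ L₀ hL₁ hL₀ hind₁ hind₀ L hL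
end

section
/- Let (Ω, P) be a probability space, let z : Ω → ℝ be uniformly distributed on [0,1], let a ∈ ℝ, σ(a) = 1/(1 + exp(−a)), and h = 1_{z < σ(a)}. Let L₁, L₀ : Ω → ℝ be square-integrable random variables each independent of z, and set L = h·L₁ + (1 − h)·L₀. Then the covariance between h and L satisfies Cov[h, L] = E[(h − E[h])·(L − E[L])] = σ(a)(1 − σ(a))·(E[L₁] − E[L₀]); in particular the unbiased gradient estimator's expectation E[(h − σ(a))·L] equals the covariance between the stochastic binary decision h and the loss L. -/
/-!
Since `h` takes only the values `0` and `1`, `h * L = h * L₁`; since `h` is a function of `z`,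
it is independent of `L₁` and of `L₀`. With `p = E[h] = σ(a)` this gives `E[h L] = p E[L₁]` and
`E[L] = p E[L₁] + (1 - p) E[L₀]`, hence `Cov[h, L] = E[h L] - p E[L] = p (1 - p) (E[L₁] - E[L₀])`.
The estimator identity holds because `h - E[h]` has mean zero.
-/

open MeasureTheory ProbabilityTheory

lemma sigmoid_mem_Icc (a : ℝ) : sigmoid a ∈ Set.Icc (0 : ℝ) 1 := by
  have hpos : 0 < 1 + Real.exp (-a) := by positivity
  refine ⟨by unfold sigmoid; positivity, ?_⟩
  rw [sigmoid, div_le_one hpos]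
  linarith [Real.exp_pos (-a)]

section Uniform

variable {Ω : Type*} [MeasurableSpace Ω] {μ : Measure Ω} {z : Ω → ℝ}

lemma integral_ite_lt_of_map_eq_uniform (hz : Measurable z)
    (hunif : μ.map z = volume.restrict (Set.Icc (0 : ℝ) 1)) {p : ℝ} (hp : p ∈ Set.Icc (0 : ℝ) 1) :
    ∫ ω, (if z ω < p then (1 : ℝ) else 0) ∂μ = p := by
  have hIio : Set.Iio p ∩ Set.Icc 0 1 = Set.Ico 0 p := by
    ext t
    simp only [Set.mem_inter_iff, Set.mem_Iio, Set.mem_Icc, Set.mem_Ico]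
    constructor
    · rintro ⟨htp, ht0, -⟩
      exact ⟨ht0, htp⟩
    · rintro ⟨ht0, htp⟩
      exact ⟨htp, ht0, htp.le.trans hp.2⟩
  calc ∫ ω, (if z ω < p then (1 : ℝ) else 0) ∂μ
      = ∫ ω, (z ⁻¹' Set.Iio p).indicator 1 ω ∂μ := by
        rfl
    _ = (volume.restrict (Set.Icc (0 : ℝ) 1)).real (Set.Iio p) := by
        rw [integral_indicator_one (hz measurableSet_Iio), ← hunif,
          map_measureReal_apply hz measurableSet_Iio]
    _ = p := by
        rw [measureReal_restrict_apply measurableSet_Iio, hIio, Real.volume_real_Ico, sub_zero,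
          max_eq_left hp.1]

end Uniform

section Covariance

variable {Ω : Type*} [MeasurableSpace Ω] {μ : Measure Ω}

lemma integral_sub_integral_mul_eq_covariance [IsProbabilityMeasure μ] {X Y : Ω → ℝ} (hX : MemLp X 2 μ)
    (hY : MemLp Y 2 μ) : ∫ ω, (X ω - μ[X]) * Y ω ∂μ = cov[X, Y; μ] := by
  have hXY : Integrable (fun ω => X ω * Y ω) μ := hX.integrable_mul hY
  have hcY : Integrable (fun ω => μ[X] * Y ω) μ := (hY.integrable one_le_two).const_mul _
  simp_rw [sub_mul]
  rw [integral_sub hXY hcY, integral_const_mul, covariance_eq_sub hX hY]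
  rfl

variable {h L₁ L₀ : Ω → ℝ}

lemma MeasureTheory.MemLp.binary_mul {p : ENNReal} {L : Ω → ℝ} (hL : MemLp L p μ)
    (hbin : ∀ ω, h ω = 0 ∨ h ω = 1) (hm : AEStronglyMeasurable h μ) :
    MemLp (fun ω => h ω * L ω) p μ :=
  hL.of_le (hm.mul hL.aestronglyMeasurable) <| ae_of_all _ fun ω => by
    rcases hbin ω with h0 | h1 <;> simp [*]

lemma memLp_of_binary [IsFiniteMeasure μ] {p : ENNReal} (hbin : ∀ ω, h ω = 0 ∨ h ω = 1)
    (hm : AEStronglyMeasurable h μ) : MemLp h p μ := by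
  simpa using (memLp_const (1 : ℝ)).binary_mul hbin hm

lemma memLp_binary_mixture {p : ENNReal} (hbin : ∀ ω, h ω = 0 ∨ h ω = 1)
    (hm : AEStronglyMeasurable h μ) (hL₁ : MemLp L₁ p μ) (hL₀ : MemLp L₀ p μ) :
    MemLp (fun ω => h ω * L₁ ω + (1 - h ω) * L₀ ω) p μ := by
  refine (hL₁.binary_mul hbin hm).add (hL₀.binary_mul (fun ω => ?_) (by fun_prop))
  rcases hbin ω with h0 | h1 <;> simp [*]

lemma covariance_binary_mixture [IsProbabilityMeasure μ] (hbin : ∀ ω, h ω = 0 ∨ h ω = 1)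
    (hm : AEStronglyMeasurable h μ) (hL₁ : MemLp L₁ 2 μ) (hL₀ : MemLp L₀ 2 μ)
    (hind₁ : IndepFun h L₁ μ) (hind₀ : IndepFun h L₀ μ) :
    cov[h, fun ω => h ω * L₁ ω + (1 - h ω) * L₀ ω; μ] = μ[h] * (1 - μ[h]) * (μ[L₁] - μ[L₀]) := by
  have hI₁ : Integrable (fun ω => h ω * L₁ ω) μ :=
    (hL₁.binary_mul hbin hm).integrable one_le_two
  have hI₀ : Integrable (fun ω => h ω * L₀ ω) μ :=
    (hL₀.binary_mul hbin hm).integrable one_le_two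
  have hE₁ : μ[fun ω => h ω * L₁ ω] = μ[h] * μ[L₁] :=
    hind₁.integral_mul_eq_mul_integral hm hL₁.aestronglyMeasurable
  have hE₀ : μ[fun ω => h ω * L₀ ω] = μ[h] * μ[L₀] :=
    hind₀.integral_mul_eq_mul_integral hm hL₀.aestronglyMeasurable
  have hselect : (h * fun ω => h ω * L₁ ω + (1 - h ω) * L₀ ω) = fun ω => h ω * L₁ ω := by
    ext ω
    rcases hbin ω with h0 | h1 <;> simp [*]
  have hmean : μ[fun ω => h ω * L₁ ω + (1 - h ω) * L₀ ω]
      = μ[fun ω => h ω * L₁ ω] + (μ[L₀] - μ[fun ω => h ω * L₀ ω]) := by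
    simp_rw [sub_mul, one_mul]
    have hI : Integrable (fun ω => L₀ ω - h ω * L₀ ω) μ := (hL₀.integrable one_le_two).sub hI₀
    rw [integral_add hI₁ hI, integral_sub (hL₀.integrable one_le_two) hI₀]
  rw [covariance_eq_sub (memLp_of_binary hbin hm) (memLp_binary_mixture hbin hm hL₁ hL₀),
    hselect, hmean, hE₁, hE₀]
  ring

end Covariance

/-- With `z` uniform on `[0,1]`, `h = 1_{z < σ(a)}`, square-integrable
losses `L₁, L₀` independent of `z`, and `L = h·L₁ + (1 − h)·L₀`, the covariance
between `h` and `L` satisfies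
`Cov[h, L] = E[(h − E[h])·(L − E[L])] = σ(a)(1 − σ(a))·(E[L₁] − E[L₀])`,
and the unbiased estimator's expectation `E[(h − σ(a))·L]` equals this covariance. -/
theorem stmt13 {Ω : Type*} [MeasurableSpace Ω] (μ : Measure Ω) [IsProbabilityMeasure μ]
    (z : Ω → ℝ) (hz : Measurable z)
    (hunif : Measure.map z μ = volume.restrict (Set.Icc (0 : ℝ) 1))
    (a : ℝ) (h : Ω → ℝ) (hh : h = fun ω => if z ω < sigmoid a then 1 else 0)
    (L₁ L₀ : Ω → ℝ) (hL₁ : MemLp L₁ 2 μ) (hL₀ : MemLp L₀ 2 μ)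
    (hind₁ : IndepFun L₁ z μ) (hind₀ : IndepFun L₀ z μ)
    (L : Ω → ℝ) (hL : L = fun ω => h ω * L₁ ω + (1 - h ω) * L₀ ω) :
    (∫ ω, (h ω - ∫ ω', h ω' ∂μ) * (L ω - ∫ ω', L ω' ∂μ) ∂μ)
        = sigmoid a * (1 - sigmoid a) * ((∫ ω, L₁ ω ∂μ) - ∫ ω, L₀ ω ∂μ) ∧
    (∫ ω, (h ω - sigmoid a) * L ω ∂μ)
        = ∫ ω, (h ω - ∫ ω', h ω' ∂μ) * (L ω - ∫ ω', L ω' ∂μ) ∂μ := by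
  have hmean : μ[h] = sigmoid a :=
    hh ▸ integral_ite_lt_of_map_eq_uniform hz hunif (sigmoid_mem_Icc a)
  have hbin : ∀ ω, h ω = 0 ∨ h ω = 1 := fun ω => by
    simp only [hh]
    split_ifs <;> simp
  have hthreshold : Measurable fun t : ℝ => if t < sigmoid a then (1 : ℝ) else 0 :=
    Measurable.ite measurableSet_Iio measurable_const measurable_const
  have hm : Measurable h := hh ▸ hthreshold.comp hz
  have hindep : ∀ L' : Ω → ℝ, IndepFun L' z μ → IndepFun h L' μ := fun L' hL' =>
    hh ▸ (hL'.comp measurable_id hthreshold).symm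
  subst hL
  rw [← hmean]
  exact ⟨covariance_binary_mixture hbin hm.aestronglyMeasurable hL₁ hL₀ (hindep L₁ hind₁)
      (hindep L₀ hind₀),
    integral_sub_integral_mul_eq_covariance (memLp_of_binary hbin hm.aestronglyMeasurable)
      (memLp_binary_mixture hbin hm.aestronglyMeasurable hL₁ hL₀)⟩
end
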